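/- For $k \ge 1$ define $v_k = \frac{1}{\sqrt{k}} \sum_{\ell=1}^k 2^{-\ell/2} \sum_{j=2^\ell}^{2^{\ell+1}-1} w_{2j} \otimes w_{2j}$, i.e. $v_k(x_1,x_2) = \frac{1}{\sqrt{k}} \sum_{\ell=1}^k 2^{-\ell/2} \sum_{j=2^\ell}^{2^{\ell+1}-1} w_{2j}(x_1) w_{2j}(x_2)$, where $w_m$ are the normalized Hermite functions. Then $\|v_k\|_{L^2(\mathbb{R}^2)} = 1$ and there is $c > 0$ with $v_k(0,0) \ge c\, k^{1/2}$ for all $k \ge 1$. -/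

import Mathlib

open Polynomial Real MeasureTheory Finset

/-- The physicists' Hermite polynomials: `H₀ = 1`, `H_{n+1}(x) = 2x H_n(x) - H_n'(x)`. -/
noncomputable def hermiteP : ℕ → Polynomial ℝ
  | 0 => 1
  | n + 1 => C 2 * X * hermiteP n - derivative (hermiteP n)

/-- The `L²`-normalized Hermite functions
`w_ℓ(y) = (2^ℓ ℓ! √π)^{-1/2} H_ℓ(y) e^{-y²/2}`. -/
noncomputable def hermiteFun (ℓ : ℕ) (y : ℝ) : ℝ :=
  ((2 ^ ℓ * (ℓ.factorial : ℝ) * Real.sqrt π) ^ (-(1 : ℝ) / 2)) *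
    (hermiteP ℓ).eval y * Real.exp (-y ^ 2 / 2)

/-- The dyadic combination
`v_k(x₁,x₂) = k^{-1/2} ∑_{ℓ=1}^k 2^{-ℓ/2} ∑_{j=2^ℓ}^{2^{ℓ+1}-1} w_{2j}(x₁)w_{2j}(x₂)`. -/
noncomputable def vFun (k : ℕ) (x : ℝ × ℝ) : ℝ :=
  (Real.sqrt k)⁻¹ * ∑ ℓ ∈ Finset.Icc 1 k, (2 : ℝ) ^ (-(ℓ : ℝ) / 2) *
    ∑ j ∈ Finset.Ico (2 ^ ℓ) (2 ^ (ℓ + 1)),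
      hermiteFun (2 * j) x.1 * hermiteFun (2 * j) x.2

lemma hermiteP_succ (n : ℕ) :
    hermiteP (n + 1) = C 2 * X * hermiteP n - derivative (hermiteP n) := rfl

lemma derivative_hermiteP (n : ℕ) :
    derivative (hermiteP (n + 1)) = C (2 * (n + 1) : ℝ) * hermiteP n := by
  induction n with
  | zero => simp [hermiteP]
  | succ n ih =>
    rw [hermiteP_succ (n + 1), derivative_sub, ih]
    simp only [derivative_mul, derivative_C, derivative_X, ih]
    rw [hermiteP_succ n]
    push_cast
    rw [show (2 * ((n : ℝ) + 1 + 1)) = 2 + 2 * ((n : ℝ) + 1) by ring, C_add]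
    ring

lemma integrable_pow_gauss (n : ℕ) :
    Integrable fun x : ℝ => x ^ n * Real.exp (-x ^ 2) := by
  have h : (-1 : ℝ) < (n : ℝ) := lt_of_lt_of_le (by norm_num) (Nat.cast_nonneg n)
  have := integrable_rpow_mul_exp_neg_mul_sq (b := 1) one_pos h
  simpa [Real.rpow_natCast, neg_mul, one_mul] using this

lemma integrable_poly_gauss (p : ℝ[X]) :
    Integrable fun x : ℝ => p.eval x * Real.exp (-x ^ 2) := by
  have : (fun x : ℝ => p.eval x * Real.exp (-x ^ 2))
      = fun x => ∑ i ∈ Finset.range (p.natDegree + 1),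
          p.coeff i * (x ^ i * Real.exp (-x ^ 2)) := by
    funext x
    rw [Polynomial.eval_eq_sum_range, Finset.sum_mul]
    simp [mul_assoc]
  rw [this]
  exact integrable_finset_sum _ fun i _ => (integrable_pow_gauss i).const_mul _

noncomputable def J (p : ℝ[X]) : ℝ := ∫ x : ℝ, p.eval x * Real.exp (-x ^ 2)

lemma J_add (p q : ℝ[X]) : J (p + q) = J p + J q := by
  unfold J
  simp_rw [eval_add, add_mul]
  exact integral_add (integrable_poly_gauss p) (integrable_poly_gauss q)

lemma J_sub (p q : ℝ[X]) : J (p - q) = J p - J q := by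
  unfold J
  simp_rw [eval_sub, sub_mul]
  exact integral_sub (integrable_poly_gauss p) (integrable_poly_gauss q)

lemma J_smul (a : ℝ) (p : ℝ[X]) : J (C a * p) = a * J p := by
  unfold J
  simp_rw [eval_mul, eval_C, mul_assoc]
  exact integral_const_mul a _

lemma J_zero : J 0 = 0 := by unfold J; simp

lemma J_one : J 1 = Real.sqrt π := by
  unfold J
  simp only [eval_one, one_mul]
  simpa using integral_gaussian 1

lemma J_parts (p : ℝ[X]) : J (C 2 * X * p) = J (derivative p) := by
  have hderiv : ∀ x : ℝ, HasDerivAt (fun x : ℝ => p.eval x * Real.exp (-x ^ 2))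
      ((derivative p).eval x * Real.exp (-x ^ 2) - (C 2 * X * p).eval x * Real.exp (-x ^ 2)) x := by
    intro x
    have h1 : HasDerivAt (fun x : ℝ => -x ^ 2) (-(2 * x)) x := by
      simpa using (hasDerivAt_pow 2 x).fun_neg
    have h3 := (p.hasDerivAt x).fun_mul h1.exp
    refine h3.congr_deriv ?_
    simp only [eval_mul, eval_C, eval_X]
    ring
  have h0 := integral_eq_zero_of_hasDerivAt_of_integrable hderiv
    ((integrable_poly_gauss _).sub (integrable_poly_gauss _)) (integrable_poly_gauss p)
  rw [integral_sub (integrable_poly_gauss _) (integrable_poly_gauss _)] at h0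
  unfold J
  linarith

lemma keyJ (m n : ℕ) :
    J (hermiteP m * hermiteP (n + 1)) = J (derivative (hermiteP m) * hermiteP n) := by
  have h1 : hermiteP m * hermiteP (n + 1)
      = C 2 * X * (hermiteP m * hermiteP n) - hermiteP m * derivative (hermiteP n) := by
    rw [hermiteP_succ]; ring
  rw [h1, J_sub, J_parts, derivative_mul, J_add]
  ring

lemma J_comm (p q : ℝ[X]) : J (p * q) = J (q * p) := by rw [mul_comm]

lemma J_hermite : ∀ n m : ℕ, J (hermiteP m * hermiteP n)
    = if m = n then 2 ^ n * n.factorial * Real.sqrt π else 0 := by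
  intro n
  induction n with
  | zero =>
    intro m
    match m with
    | 0 => simpa [hermiteP] using J_one
    | m + 1 =>
      rw [J_comm, keyJ 0 m]
      simp [hermiteP, J_zero]
  | succ n ih =>
    intro m
    match m with
    | 0 =>
      rw [keyJ 0 n]
      simp [hermiteP, J_zero]
    | m + 1 =>
      rw [keyJ (m + 1) n, derivative_hermiteP, mul_assoc, J_smul, ih m]
      by_cases h : m = n
      · subst h
        simp only [if_pos rfl, Nat.factorial_succ]
        push_cast
        ring
      · simp [h, fun hh => h (Nat.succ_injective hh)]


noncomputable def hC (n : ℕ) : ℝ := ((2 : ℝ) ^ n * n.factorial * Real.sqrt π) ^ (-(1 : ℝ) / 2)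

lemma hBase_pos (n : ℕ) : (0 : ℝ) < 2 ^ n * n.factorial * Real.sqrt π := by
  have h1 : (0 : ℝ) < Real.sqrt π := Real.sqrt_pos.mpr Real.pi_pos
  have h2 : (0 : ℝ) < (n.factorial : ℝ) := by exact_mod_cast n.factorial_pos
  positivity

lemma hC_sq (n : ℕ) : hC n ^ 2 = ((2 : ℝ) ^ n * n.factorial * Real.sqrt π)⁻¹ := by
  unfold hC
  rw [← Real.rpow_natCast (_ ^ (-(1 : ℝ) / 2)) 2, ← Real.rpow_mul (hBase_pos n).le]
  norm_num [Real.rpow_neg_one]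

lemma hermiteFun_mul (a b : ℕ) (y : ℝ) :
    hermiteFun a y * hermiteFun b y
      = (hC a * hC b) * ((hermiteP a * hermiteP b).eval y * Real.exp (-y ^ 2)) := by
  have hexp : Real.exp (-y ^ 2 / 2) * Real.exp (-y ^ 2 / 2) = Real.exp (-y ^ 2) := by
    rw [← Real.exp_add]; ring_nf
  unfold hermiteFun hC
  rw [eval_mul, ← hexp]
  ring

lemma integrable_hermiteFun_mul (a b : ℕ) :
    Integrable fun y : ℝ => hermiteFun a y * hermiteFun b y := by
  simp_rw [hermiteFun_mul]
  exact (integrable_poly_gauss _).const_mul _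

lemma hermiteFun_orthonormal (a b : ℕ) :
    ∫ y : ℝ, hermiteFun a y * hermiteFun b y = if a = b then 1 else 0 := by
  simp_rw [hermiteFun_mul]
  rw [integral_const_mul]
  have : (∫ y : ℝ, (hermiteP a * hermiteP b).eval y * Real.exp (-y ^ 2))
      = J (hermiteP a * hermiteP b) := rfl
  rw [this, J_hermite]
  split_ifs with h
  · subst h
    rw [← sq, hC_sq]
    exact inv_mul_cancel₀ (hBase_pos a).ne'
  · simp

lemma integrable2 (a b : ℕ) :
    Integrable fun x : ℝ × ℝ =>
      (hermiteFun a x.1 * hermiteFun b x.1) * (hermiteFun a x.2 * hermiteFun b x.2) := by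
  rw [show (volume : Measure (ℝ × ℝ)) = (volume : Measure ℝ).prod volume from
    Measure.volume_eq_prod ℝ ℝ]
  exact (integrable_hermiteFun_mul a b).mul_prod (integrable_hermiteFun_mul a b)

lemma integral2 (a b : ℕ) :
    (∫ x : ℝ × ℝ, (hermiteFun a x.1 * hermiteFun b x.1) * (hermiteFun a x.2 * hermiteFun b x.2))
      = if a = b then 1 else 0 := by
  rw [show (volume : Measure (ℝ × ℝ)) = (volume : Measure ℝ).prod volume from
    Measure.volume_eq_prod ℝ ℝ]
  rw [integral_prod_mul (fun y => hermiteFun a y * hermiteFun b y)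
    (fun y => hermiteFun a y * hermiteFun b y), hermiteFun_orthonormal]
  split_ifs <;> simp


def TT (k : ℕ) : Finset ((_ : ℕ) × ℕ) :=
  (Finset.Icc 1 k).sigma fun ℓ => Finset.Ico (2 ^ ℓ) (2 ^ (ℓ + 1))

lemma vFun_eq (k : ℕ) (x : ℝ × ℝ) :
    vFun k x = (Real.sqrt k)⁻¹ * ∑ p ∈ TT k,
      (2 : ℝ) ^ (-(p.1 : ℝ) / 2) * (hermiteFun (2 * p.2) x.1 * hermiteFun (2 * p.2) x.2) := by
  unfold vFun TT
  rw [Finset.sum_sigma]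
  simp_rw [Finset.mul_sum]

lemma TT_inj {k : ℕ} {p q : (_ : ℕ) × ℕ} (hp : p ∈ TT k) (hq : q ∈ TT k)
    (h : p.2 = q.2) : p = q := by
  rw [TT, Finset.mem_sigma, Finset.mem_Ico] at hp hq
  have h1 : p.1 = q.1 := by
    by_contra hne
    rcases Nat.lt_or_ge p.1 q.1 with hlt | hge
    · have : p.2 < p.2 := lt_of_lt_of_le (hp.2.2)
        (le_trans (Nat.pow_le_pow_right (by norm_num) hlt) (h ▸ hq.2.1))
      exact absurd this (lt_irrefl _)
    · have hlt : q.1 < p.1 := lt_of_le_of_ne hge (fun hh => hne hh.symm)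
      have : q.2 < q.2 := lt_of_lt_of_le (hq.2.2)
        (le_trans (Nat.pow_le_pow_right (by norm_num) hlt) (h ▸ hp.2.1))
      exact absurd this (lt_irrefl _)
  exact Sigma.ext h1 (by rw [h])

lemma l2norm (k : ℕ) (hk : 1 ≤ k) : (∫ x : ℝ × ℝ, (vFun k x) ^ 2) = 1 := by
  have hv : ∀ x : ℝ × ℝ, (vFun k x) ^ 2 = ((Real.sqrt k)⁻¹) ^ 2 *
      ∑ p ∈ TT k, ∑ q ∈ TT k,
        ((2 : ℝ) ^ (-(p.1 : ℝ) / 2) * (2 : ℝ) ^ (-(q.1 : ℝ) / 2)) *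
        ((hermiteFun (2 * p.2) x.1 * hermiteFun (2 * q.2) x.1) *
          (hermiteFun (2 * p.2) x.2 * hermiteFun (2 * q.2) x.2)) := by
    intro x
    rw [vFun_eq, mul_pow,
      sq (∑ p ∈ TT k, (2 : ℝ) ^ (-(p.1 : ℝ) / 2) *
        (hermiteFun (2 * p.2) x.1 * hermiteFun (2 * p.2) x.2)),
      Finset.sum_mul_sum]
    congr 1
    refine Finset.sum_congr rfl fun p _ => Finset.sum_congr rfl fun q _ => ?_
    ring
  simp_rw [hv]
  rw [integral_const_mul, integral_finset_sum _ (fun p _ =>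
    integrable_finset_sum _ (fun q _ => (integrable2 (2 * p.2) (2 * q.2)).const_mul _))]
  have hterm : ∀ p ∈ TT k, (∫ x : ℝ × ℝ, ∑ q ∈ TT k,
      ((2 : ℝ) ^ (-(p.1 : ℝ) / 2) * (2 : ℝ) ^ (-(q.1 : ℝ) / 2)) *
        ((hermiteFun (2 * p.2) x.1 * hermiteFun (2 * q.2) x.1) *
          (hermiteFun (2 * p.2) x.2 * hermiteFun (2 * q.2) x.2)))
      = (2 : ℝ) ^ (-(p.1 : ℝ)) := by
    intro p hp
    rw [integral_finset_sum _ (fun q _ => (integrable2 (2 * p.2) (2 * q.2)).const_mul _)]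
    have hval : ∀ q : (_ : ℕ) × ℕ, (∫ x : ℝ × ℝ,
        ((2 : ℝ) ^ (-(p.1 : ℝ) / 2) * (2 : ℝ) ^ (-(q.1 : ℝ) / 2)) *
          ((hermiteFun (2 * p.2) x.1 * hermiteFun (2 * q.2) x.1) *
            (hermiteFun (2 * p.2) x.2 * hermiteFun (2 * q.2) x.2)))
        = ((2 : ℝ) ^ (-(p.1 : ℝ) / 2) * (2 : ℝ) ^ (-(q.1 : ℝ) / 2)) *
            (if 2 * p.2 = 2 * q.2 then 1 else 0) := by
      intro q
      rw [integral_const_mul, integral2]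
    simp_rw [hval]
    rw [Finset.sum_eq_single_of_mem p hp]
    · rw [if_pos rfl, mul_one, ← Real.rpow_add (by norm_num : (0:ℝ) < 2)]
      ring_nf
    · intro q hq hqp
      have : ¬ (2 * p.2 = 2 * q.2) := by
        intro hh
        exact hqp (TT_inj hq hp (by omega))
      simp [this]
  rw [Finset.sum_congr rfl hterm]
  have hsum : (∑ p ∈ TT k, (2 : ℝ) ^ (-(p.1 : ℝ))) = (k : ℝ) := by
    rw [TT, Finset.sum_sigma]
    have : ∀ ℓ ∈ Finset.Icc 1 k,
        (∑ _j ∈ Finset.Ico (2 ^ ℓ) (2 ^ (ℓ + 1)), (2 : ℝ) ^ (-(ℓ : ℝ))) = 1 := by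
      intro ℓ _
      rw [Finset.sum_const, Nat.card_Ico]
      have hcard : 2 ^ (ℓ + 1) - 2 ^ ℓ = 2 ^ ℓ := by
        rw [pow_succ]; omega
      rw [hcard, nsmul_eq_mul]
      push_cast
      rw [← Real.rpow_natCast 2 ℓ, ← Real.rpow_add (by norm_num : (0:ℝ) < 2)]
      simp
    rw [Finset.sum_congr rfl this, Finset.sum_const, Nat.card_Icc]
    simp
  rw [hsum]
  rw [inv_pow, Real.sq_sqrt (Nat.cast_nonneg k)]
  have : (k : ℝ) ≠ 0 := by exact_mod_cast Nat.one_le_iff_ne_zero.mp hk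
  field_simp

lemma hermiteP_zero_eval : (hermiteP 0).eval 0 = 1 := by simp [hermiteP]

lemma h0_step (n : ℕ) :
    (hermiteP (n + 2)).eval 0 = -(2 * ((n : ℝ) + 1)) * (hermiteP n).eval 0 := by
  rw [hermiteP_succ (n + 1), eval_sub, eval_mul, eval_mul, eval_C, eval_X,
    derivative_hermiteP, eval_mul, eval_C]
  ring

lemma hermiteFun_zero_sq (n : ℕ) :
    hermiteFun n 0 * hermiteFun n 0
      = ((2 : ℝ) ^ n * n.factorial * Real.sqrt π)⁻¹ * ((hermiteP n).eval 0) ^ 2 := by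
  unfold hermiteFun
  rw [show (-(0:ℝ) ^ 2 / 2) = 0 by norm_num, Real.exp_zero]
  have : ((2 ^ n * (n.factorial : ℝ) * Real.sqrt π) ^ (-(1 : ℝ) / 2)) = hC n := rfl
  rw [this]
  have h2 : hC n * hC n = ((2 : ℝ) ^ n * n.factorial * Real.sqrt π)⁻¹ := by
    rw [← sq, hC_sq]
  calc hC n * eval 0 (hermiteP n) * 1 * (hC n * eval 0 (hermiteP n) * 1)
      = (hC n * hC n) * (eval 0 (hermiteP n)) ^ 2 := by ring
    _ = _ := by rw [h2]

lemma B_rec (j : ℕ) :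
    hermiteFun (2 * (j + 1)) 0 * hermiteFun (2 * (j + 1)) 0
      = (hermiteFun (2 * j) 0 * hermiteFun (2 * j) 0)
          * ((2 * (j : ℝ) + 1) / (2 * (j : ℝ) + 2)) := by
  have hidx : 2 * (j + 1) = (2 * j) + 2 := by ring
  rw [hidx, hermiteFun_zero_sq, hermiteFun_zero_sq, h0_step (2 * j)]
  have hfac : ((2 * j + 2).factorial : ℝ)
      = ((2 * j + 2 : ℕ) : ℝ) * ((2 * j + 1 : ℕ) : ℝ) * ((2 * j).factorial : ℝ) := by
    rw [show (2 * j + 2) = (2 * j + 1) + 1 from rfl, Nat.factorial_succ, Nat.factorial_succ]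
    push_cast
    ring
  rw [hfac]
  have hπ : Real.sqrt π ≠ 0 := (Real.sqrt_pos.mpr Real.pi_pos).ne'
  have hfac0 : ((2 * j).factorial : ℝ) ≠ 0 := by exact_mod_cast (Nat.factorial_pos _).ne'
  have hp0 : ((2 : ℝ) ^ (2 * j)) ≠ 0 := by positivity
  have hj1 : ((2 * j + 1 : ℕ) : ℝ) ≠ 0 := by positivity
  have hj2 : ((2 * j + 2 : ℕ) : ℝ) ≠ 0 := by positivity
  rw [pow_add]
  push_cast
  field_simp

lemma B_ge : ∀ j : ℕ, 1 ≤ j →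
    (2 * Real.sqrt π * Real.sqrt j)⁻¹ ≤ hermiteFun (2 * j) 0 * hermiteFun (2 * j) 0 := by
  intro j hj
  induction j with
  | zero => omega
  | succ j ih =>
    rcases Nat.eq_zero_or_pos j with h0 | hpos
    · subst h0
      rw [show 2 * (0 + 1) = 0 + 2 from rfl, hermiteFun_zero_sq, h0_step 0, hermiteP_zero_eval]
      norm_num
      rw [show (Real.sqrt π)⁻¹ * (1/8 : ℝ) * 4 = (Real.sqrt π)⁻¹ * (1/2) by ring]
    · have ihj := ih hpos
      rw [B_rec]
      have hπ : (0:ℝ) < Real.sqrt π := Real.sqrt_pos.mpr Real.pi_pos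
      have hjr : (1:ℝ) ≤ (j:ℝ) := by exact_mod_cast hpos
      have hsj : (0:ℝ) < Real.sqrt j := Real.sqrt_pos.mpr (by linarith)
      have hsj1 : (0:ℝ) < Real.sqrt ((j:ℝ) + 1) := Real.sqrt_pos.mpr (by linarith)
      have hsq : Real.sqrt j ^ 2 = (j:ℝ) := Real.sq_sqrt (by linarith)
      have hsq1 : Real.sqrt ((j:ℝ) + 1) ^ 2 = (j:ℝ) + 1 := Real.sq_sqrt (by linarith)
      have key : Real.sqrt j * (2 * (j:ℝ) + 2) ≤ Real.sqrt ((j:ℝ) + 1) * (2 * (j:ℝ) + 1) := by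
        have h1 : (Real.sqrt j * (2 * (j:ℝ) + 2)) ^ 2
            ≤ (Real.sqrt ((j:ℝ) + 1) * (2 * (j:ℝ) + 1)) ^ 2 := by
          rw [mul_pow, mul_pow, hsq, hsq1]
          nlinarith [hjr]
        calc Real.sqrt j * (2 * (j:ℝ) + 2)
            = Real.sqrt ((Real.sqrt j * (2 * (j:ℝ) + 2)) ^ 2) :=
              (Real.sqrt_sq (by positivity)).symm
          _ ≤ Real.sqrt ((Real.sqrt ((j:ℝ) + 1) * (2 * (j:ℝ) + 1)) ^ 2) :=
              Real.sqrt_le_sqrt h1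
          _ = _ := Real.sqrt_sq (by positivity)
      have step1 : (2 * Real.sqrt π * Real.sqrt ((j:ℕ) + 1 : ℕ))⁻¹
          ≤ (2 * Real.sqrt π * Real.sqrt j)⁻¹ * ((2 * (j:ℝ) + 1) / (2 * (j:ℝ) + 2)) := by
        have hcast : ((((j:ℕ) + 1 : ℕ)) : ℝ) = (j:ℝ) + 1 := by push_cast; ring
        rw [hcast]
        rw [inv_eq_one_div, inv_eq_one_div, div_mul_div_comm, one_mul]
        rw [div_le_div_iff₀ (by positivity) (by positivity)]
        calc 1 * (2 * Real.sqrt π * Real.sqrt j * (2 * (j:ℝ) + 2))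
            = (2 * Real.sqrt π) * (Real.sqrt j * (2 * (j:ℝ) + 2)) := by ring
          _ ≤ (2 * Real.sqrt π) * (Real.sqrt ((j:ℝ) + 1) * (2 * (j:ℝ) + 1)) := by
              exact mul_le_mul_of_nonneg_left key (by positivity)
          _ = (2 * (j:ℝ) + 1) * (2 * Real.sqrt π * Real.sqrt ((j:ℝ) + 1)) := by ring
      refine le_trans step1 ?_
      exact mul_le_mul_of_nonneg_right ihj (by positivity)

lemma pointwise (k : ℕ) (hk : 1 ≤ k) :
    (2 * Real.sqrt 2 * Real.sqrt π)⁻¹ * Real.sqrt k ≤ vFun k (0, 0) := by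
  have h2 : (0:ℝ) < 2 := two_pos
  have hπ : (0:ℝ) < Real.sqrt π := Real.sqrt_pos.mpr Real.pi_pos
  set c₀ : ℝ := (2 * Real.sqrt 2 * Real.sqrt π)⁻¹ with hc₀
  -- bound each ℓ-term from below by c₀
  have hterm : ∀ ℓ ∈ Finset.Icc 1 k,
      c₀ ≤ (2 : ℝ) ^ (-(ℓ : ℝ) / 2) *
        ∑ j ∈ Finset.Ico (2 ^ ℓ) (2 ^ (ℓ + 1)),
          hermiteFun (2 * j) (0:ℝ) * hermiteFun (2 * j) (0:ℝ) := by
    intro ℓ hℓ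
    have hℓ1 : 1 ≤ ℓ := (Finset.mem_Icc.mp hℓ).1
    set D : ℝ := Real.sqrt ((2:ℝ) ^ (ℓ + 1)) with hD
    have hDpos : 0 < D := Real.sqrt_pos.mpr (by positivity)
    have hbound : ∀ j ∈ Finset.Ico (2 ^ ℓ) (2 ^ (ℓ + 1)),
        (2 * Real.sqrt π * D)⁻¹ ≤ hermiteFun (2 * j) (0:ℝ) * hermiteFun (2 * j) (0:ℝ) := by
      intro j hjmem
      rw [Finset.mem_Ico] at hjmem
      have hj1 : 1 ≤ j := le_trans (Nat.one_le_two_pow) hjmem.1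
      refine le_trans ?_ (B_ge j hj1)
      have hsqle : Real.sqrt j ≤ D := by
        refine Real.sqrt_le_sqrt ?_
        have : (j : ℝ) ≤ ((2 ^ (ℓ + 1) : ℕ) : ℝ) := by exact_mod_cast hjmem.2.le
        calc (j:ℝ) ≤ ((2 ^ (ℓ + 1) : ℕ) : ℝ) := this
          _ = (2:ℝ) ^ (ℓ + 1) := by push_cast; ring
      have hjpos : (0:ℝ) < Real.sqrt j := Real.sqrt_pos.mpr (by exact_mod_cast hj1)
      apply inv_anti₀ (by positivity)
      exact mul_le_mul_of_nonneg_left hsqle (by positivity)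
    have hsum : (Finset.Ico (2 ^ ℓ) (2 ^ (ℓ + 1))).card • (2 * Real.sqrt π * D)⁻¹
        ≤ ∑ j ∈ Finset.Ico (2 ^ ℓ) (2 ^ (ℓ + 1)),
            hermiteFun (2 * j) (0:ℝ) * hermiteFun (2 * j) (0:ℝ) :=
      Finset.card_nsmul_le_sum _ _ _ hbound
    have hcard : (Finset.Ico (2 ^ ℓ) (2 ^ (ℓ + 1))).card = 2 ^ ℓ := by
      rw [Nat.card_Ico, pow_succ]; omega
    rw [hcard, nsmul_eq_mul] at hsum
    have hexact : (2 : ℝ) ^ (-(ℓ : ℝ) / 2) *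
        (((2 ^ ℓ : ℕ) : ℝ) * (2 * Real.sqrt π * D)⁻¹) = c₀ := by
      have hN : ((2 ^ ℓ : ℕ) : ℝ) = (2:ℝ) ^ (ℓ:ℝ) := by
        push_cast; rw [Real.rpow_natCast]
      have hDr : D = (2:ℝ) ^ (((ℓ:ℝ) + 1) / 2) := by
        rw [hD, Real.sqrt_eq_rpow, ← Real.rpow_natCast 2 (ℓ + 1),
          ← Real.rpow_mul h2.le]
        push_cast; ring_nf
      have hs2 : Real.sqrt 2 = (2:ℝ) ^ ((1:ℝ)/2) := by
        rw [Real.sqrt_eq_rpow]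
      have hmain : (2:ℝ) ^ (-(ℓ:ℝ)/2) * (2:ℝ) ^ ((ℓ:ℝ)) * ((2:ℝ) ^ (((ℓ:ℝ)+1)/2))⁻¹
          = (Real.sqrt 2)⁻¹ := by
        rw [hs2, ← Real.rpow_neg h2.le (((ℓ:ℝ)+1)/2), ← Real.rpow_add h2,
          ← Real.rpow_add h2, ← Real.rpow_neg h2.le]
        congr 1
        ring
      calc (2 : ℝ) ^ (-(ℓ : ℝ) / 2) * (((2 ^ ℓ : ℕ) : ℝ) * (2 * Real.sqrt π * D)⁻¹)
          = ((2:ℝ) ^ (-(ℓ:ℝ)/2) * (2:ℝ) ^ ((ℓ:ℝ)) * ((2:ℝ) ^ (((ℓ:ℝ)+1)/2))⁻¹)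
              * (2 * Real.sqrt π)⁻¹ := by
            rw [hN, hDr, mul_inv, mul_inv]; ring
        _ = (Real.sqrt 2)⁻¹ * (2 * Real.sqrt π)⁻¹ := by rw [hmain]
        _ = c₀ := by
            rw [hc₀, mul_inv, mul_inv, mul_inv]
            ring
    calc c₀ = (2 : ℝ) ^ (-(ℓ : ℝ) / 2) * (((2 ^ ℓ : ℕ) : ℝ) * (2 * Real.sqrt π * D)⁻¹) :=
          hexact.symm
      _ ≤ (2 : ℝ) ^ (-(ℓ : ℝ) / 2) *
          ∑ j ∈ Finset.Ico (2 ^ ℓ) (2 ^ (ℓ + 1)),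
            hermiteFun (2 * j) (0:ℝ) * hermiteFun (2 * j) (0:ℝ) := by
          apply mul_le_mul_of_nonneg_left _ (by positivity)
          exact_mod_cast hsum
  -- sum the bound
  have hsum2 : (k : ℝ) * c₀ ≤ ∑ ℓ ∈ Finset.Icc 1 k, (2 : ℝ) ^ (-(ℓ : ℝ) / 2) *
      ∑ j ∈ Finset.Ico (2 ^ ℓ) (2 ^ (ℓ + 1)),
        hermiteFun (2 * j) (0:ℝ) * hermiteFun (2 * j) (0:ℝ) := by
    have := Finset.card_nsmul_le_sum (Finset.Icc 1 k) _ c₀ hterm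
    rw [Nat.card_Icc] at this
    simpa [nsmul_eq_mul] using this
  have hkpos : (0:ℝ) < (k:ℝ) := by exact_mod_cast hk
  have hskpos : (0:ℝ) < Real.sqrt k := Real.sqrt_pos.mpr hkpos
  have hc₀pos : 0 < c₀ := by rw [hc₀]; positivity
  unfold vFun
  calc c₀ * Real.sqrt k = (Real.sqrt k)⁻¹ * ((k:ℝ) * c₀) := by
        field_simp
        rw [Real.sq_sqrt hkpos.le]
    _ ≤ _ := by
        apply mul_le_mul_of_nonneg_left hsum2 (by positivity)

/-- `‖v_k‖_{L²(ℝ²)} = 1` and `v_k(0,0) ≥ c √k`. -/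
theorem stmt9 :
    (∀ k : ℕ, 1 ≤ k → (∫ x : ℝ × ℝ, (vFun k x) ^ 2) = 1) ∧
    ∃ c : ℝ, 0 < c ∧ ∀ k : ℕ, 1 ≤ k → c * Real.sqrt k ≤ vFun k (0, 0) := by
  refine ⟨fun k hk => l2norm k hk, (2 * Real.sqrt 2 * Real.sqrt π)⁻¹, ?_, fun k hk => pointwise k hk⟩
  have hπ : (0:ℝ) < Real.sqrt π := Real.sqrt_pos.mpr Real.pi_pos
  positivity
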